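/- Let G be an invertible p×p real matrix, R a p×p orthogonal matrix, and L = {Rᵀ Gᵀ f : f ∈ ℤ^p}. Suppose ρ ≥ 0 is such that every z ∈ ℝ^p is within Euclidean distance ρ of some point of L. Then for every c ∈ ℝ^p and every t ≥ 2ρ, the number N of points of L lying in the axis-aligned cube c + [−t/2, t/2]^p satisfies (t − 2ρ)^p ≤ N·|det(G)| ≤ (t + 2ρ)^p. -/

import Mathlib

open Function Matrix MeasureTheory Metric Submodule
open scoped Pointwise

/-!
The Voronoi cell `V` of a lattice, the set of points at least as close to `0` as to any other
lattice point, is a fundamental domain up to null sets: two of its translates meet only on a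
perpendicular bisector, a hyperplane. Hence `vol V` is the covolume `|det G|` (the rotation `R`
does not change it), and the covering hypothesis puts `V` inside the ball of radius `ρ`. The
translates `v + V` over the lattice points `v` of the cube are therefore disjoint and lie in the
cube enlarged by `ρ`, while they cover the cube shrunk by `ρ`; comparing volumes gives both
bounds.
-/

section Voronoi

variable {E : Type*} [NormedAddCommGroup E]

def voronoiCell (L : AddSubgroup E) : Set E := {x | ∀ v ∈ L, ‖x‖ ≤ ‖x - v‖}

variable {L : AddSubgroup E}

theorem isClosed_voronoiCell : IsClosed (voronoiCell L) := by
  simp only [voronoiCell, Set.ofPred_forall]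
  exact isClosed_iInter fun v => isClosed_iInter fun _ =>
    isClosed_le continuous_norm (continuous_norm.comp (continuous_sub_right v))

theorem voronoiCell_subset_closedBall {ρ : ℝ} (hcov : ∀ z : E, ∃ v ∈ L, dist z v ≤ ρ) :
    voronoiCell L ⊆ closedBall 0 ρ := fun x hx => by
  obtain ⟨v, hvL, hv⟩ := hcov x
  rw [mem_closedBall, dist_zero_right]
  exact (hx v hvL).trans (dist_eq_norm x v ▸ hv)

theorem exists_sub_mem_voronoiCell [ProperSpace E] (hL : IsClosed (L : Set E)) (x : E) :
    ∃ v ∈ L, x - v ∈ voronoiCell L := by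
  obtain ⟨v, hvL, hv⟩ := hL.exists_infDist_eq_dist ⟨0, L.zero_mem⟩ x
  refine ⟨v, hvL, fun w hw => ?_⟩
  rw [sub_sub, ← dist_eq_norm, ← dist_eq_norm, ← hv]
  exact infDist_le_dist_of_mem (L.add_mem hvL hw)

variable [InnerProductSpace ℝ E]

theorem vadd_voronoiCell_inter_subset_perpBisector (v w : L) :
    (v +ᵥ voronoiCell L) ∩ (w +ᵥ voronoiCell L) ⊆
      AffineSubspace.perpBisector (v : E) w := by
  rintro x ⟨hv, hw⟩
  rw [Set.mem_vadd_set_iff_neg_vadd_mem] at hv hw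
  have h1 := hv (w - v) (w - v).2
  have h2 := hw (v - w) (v - w).2
  simp only [AddSubgroup.vadd_def, vadd_eq_add, AddSubgroup.coe_neg,
    neg_add_eq_sub, sub_sub_sub_cancel_right] at h1 h2
  rw [SetLike.mem_coe, AffineSubspace.mem_perpBisector_iff_dist_eq, dist_eq_norm, dist_eq_norm]
  exact le_antisymm h1 h2

variable [FiniteDimensional ℝ E] [MeasurableSpace E] [BorelSpace E]

theorem isAddFundamentalDomain_voronoiCell [DiscreteTopology L] (μ : Measure E)
    [μ.IsAddHaarMeasure] : IsAddFundamentalDomain L (voronoiCell L) μ where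
  nullMeasurableSet := isClosed_voronoiCell.nullMeasurableSet
  ae_covers := Filter.Eventually.of_forall fun x => by
    obtain ⟨v, hvL, hv⟩ := exists_sub_mem_voronoiCell L.isClosed_of_discrete x
    exact ⟨-⟨v, hvL⟩, by simpa [AddSubgroup.vadd_def, neg_add_eq_sub] using hv⟩
  aedisjoint v w hvw := measure_mono_null (vadd_voronoiCell_inter_subset_perpBisector v w)
    (Measure.addHaar_affineSubspace μ _
      (mt AffineSubspace.perpBisector_eq_top.1 (Subtype.coe_ne_coe.2 hvw)))

end Voronoi

namespace MeasureTheory.IsAddFundamentalDomain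

variable {E : Type*} [SeminormedAddCommGroup E] [MeasurableSpace E]
  {μ : Measure E} [μ.IsAddLeftInvariant] {L : AddSubgroup E} {F A : Set E} {ρ : ℝ}

theorem measure_le_ncard_inter_mul (hF : IsAddFundamentalDomain L F μ)
    (hFρ : F ⊆ closedBall 0 ρ) {B : Set E} (hBA : B + closedBall 0 ρ ⊆ A)
    (hA : (A ∩ L).Finite) : μ B ≤ (A ∩ L).ncard * μ F := by
  have hcover : B ≤ᵐ[μ] ⋃ v ∈ hA.toFinset, v +ᵥ F := by
    filter_upwards [hF.ae_covers] with x ⟨g, hg⟩ hxB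
    have hgA : -(g : E) ∈ A := by
      have := hBA (Set.add_mem_add hxB (by simpa using hFρ hg : -(g +ᵥ x) ∈ closedBall 0 ρ))
      rwa [AddSubgroup.vadd_def, vadd_eq_add, neg_add_rev, add_neg_cancel_left] at this
    refine Set.mem_biUnion (hA.mem_toFinset.2 ⟨hgA, neg_mem g.2⟩) ?_
    rw [Set.mem_vadd_set_iff_neg_vadd_mem, neg_neg]
    exact hg
  calc μ B ≤ μ (⋃ v ∈ hA.toFinset, v +ᵥ F) := measure_mono_ae hcover
    _ ≤ ∑ v ∈ hA.toFinset, μ (v +ᵥ F) := measure_biUnion_finset_le _ _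
    _ = (A ∩ L).ncard * μ F := by simp [measure_vadd, Set.ncard_eq_toFinset_card _ hA]

theorem ncard_inter_mul_le_measure [MeasurableAdd E] (hF : IsAddFundamentalDomain L F μ)
    (hFρ : F ⊆ closedBall 0 ρ) {C : Set E} (hAC : A + closedBall 0 ρ ⊆ C) :
    (A ∩ L).ncard * μ F ≤ μ C := by
  by_cases hA : (A ∩ L).Finite
  swap
  · simp [Set.Infinite.ncard hA]
  have hdisj : Set.Pairwise hA.toFinset (AEDisjoint μ on fun v : E => v +ᵥ F) :=
    fun v hv w hw hvw => by
      simp only [Set.Finite.coe_toFinset] at hv hw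
      exact hF.aedisjoint (i := ⟨v, hv.2⟩) (j := ⟨w, hw.2⟩) (Subtype.coe_ne_coe.1 hvw)
  have hsub : ⋃ v ∈ hA.toFinset, v +ᵥ F ⊆ C := by
    simp only [Set.iUnion_subset_iff, Set.Finite.mem_toFinset]
    rintro v ⟨hvA, -⟩ _ ⟨y, hy, rfl⟩
    exact hAC (Set.add_mem_add hvA (hFρ hy))
  calc (A ∩ L).ncard * μ F = ∑ v ∈ hA.toFinset, μ (v +ᵥ F) := by
        simp [measure_vadd, Set.ncard_eq_toFinset_card _ hA]
    _ = μ (⋃ v ∈ hA.toFinset, v +ᵥ F) :=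
        (measure_biUnion_finset₀ hdisj fun v _ => hF.nullMeasurableSet.vadd v).symm
    _ ≤ μ C := measure_mono hsub

end MeasureTheory.IsAddFundamentalDomain

theorem Matrix.abs_det_eq_one_of_transpose_mul_self {n : Type*} [Fintype n] [DecidableEq n]
    {R : Matrix n n ℝ} (hR : Rᵀ * R = 1) : |R.det| = 1 := by
  have h : R.det * R.det = 1 := by simpa [det_mul] using congrArg det hR
  nlinarith [abs_nonneg R.det, abs_mul_abs_self R.det]

section EuclideanSpace

variable {ι : Type*} [Fintype ι]

-- `WithLp.ofLp ⁻¹' closedBall c r` is the axis-parallel cube: `ι → ℝ` carries the sup norm.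
theorem preimage_ofLp_closedBall_add_closedBall_subset (c : ι → ℝ) (r ρ : ℝ) :
    (WithLp.ofLp ⁻¹' closedBall c r : Set (EuclideanSpace ℝ ι)) + closedBall 0 ρ ⊆
      WithLp.ofLp ⁻¹' closedBall c (r + ρ) := by
  rintro _ ⟨x, hx, y, hy, rfl⟩
  have hy' : ‖WithLp.ofLp y‖ ≤ ρ :=
    ((pi_norm_le_iff_of_nonneg (norm_nonneg y)).2 fun i => PiLp.norm_apply_le y i).trans
      (mem_closedBall_zero_iff.1 hy)
  rw [Set.mem_preimage, mem_closedBall, dist_eq_norm] at hx ⊢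
  calc ‖WithLp.ofLp (x + y) - c‖ = ‖(WithLp.ofLp x - c) + WithLp.ofLp y‖ := by
        rw [WithLp.ofLp_add]; abel_nf
    _ ≤ r + ρ := (norm_add_le _ _).trans (add_le_add hx hy')

theorem volume_preimage_ofLp_closedBall (c : ι → ℝ) {r : ℝ} (hr : 0 ≤ r) :
    volume (WithLp.ofLp ⁻¹' closedBall c r : Set (EuclideanSpace ℝ ι)) =
      ENNReal.ofReal ((2 * r) ^ Fintype.card ι) := by
  rw [(PiLp.volume_preserving_ofLp ι).measure_preimage measurableSet_closedBall.nullMeasurableSet,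
    Real.volume_pi_closedBall c hr]

theorem ncard_inter_mul_measureReal_voronoiCell_mem_Icc
    {L : AddSubgroup (EuclideanSpace ℝ ι)} [DiscreteTopology L] {ρ : ℝ}
    (hcov : ∀ z, ∃ v ∈ L, dist z v ≤ ρ) (c : ι → ℝ) {r : ℝ} (hρr : ρ ≤ r) :
    (WithLp.ofLp ⁻¹' closedBall c r ∩ (L : Set (EuclideanSpace ℝ ι))).ncard *
        volume.real (voronoiCell L) ∈
      Set.Icc ((2 * (r - ρ)) ^ Fintype.card ι) ((2 * (r + ρ)) ^ Fintype.card ι) := by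
  have hρ : 0 ≤ ρ := let ⟨_, _, h⟩ := hcov 0; dist_nonneg.trans h
  have hF := isAddFundamentalDomain_voronoiCell (L := L) volume
  have hFρ := voronoiCell_subset_closedBall hcov
  have hF_ne_top : volume (voronoiCell L) ≠ ⊤ :=
    measure_ne_top_of_subset hFρ measure_closedBall_lt_top.ne
  have hA : (WithLp.ofLp ⁻¹' closedBall c r ∩ (L : Set (EuclideanSpace ℝ ι))).Finite :=
    Metric.finite_isBounded_inter_isClosed DiscreteTopology.isDiscrete
      ((PiLp.antilipschitzWith_ofLp 2 _).isBounded_preimage isBounded_closedBall)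
      L.isClosed_of_discrete
  have hlow := hF.measure_le_ncard_inter_mul hFρ
    (by simpa using preimage_ofLp_closedBall_add_closedBall_subset c (r - ρ) ρ) hA
  have hup := hF.ncard_inter_mul_le_measure hFρ
    (preimage_ofLp_closedBall_add_closedBall_subset c r ρ)
  rw [volume_preimage_ofLp_closedBall c (by linarith)] at hlow hup
  refine ⟨?_, ?_⟩
  · rwa [ENNReal.ofReal_le_iff_le_toReal (ENNReal.mul_ne_top (ENNReal.natCast_ne_top _) hF_ne_top),
      ENNReal.toReal_mul, ENNReal.toReal_natCast] at hlow
  · have := ENNReal.toReal_le_of_le_ofReal (pow_nonneg (by linarith) _) hup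
    rwa [ENNReal.toReal_mul, ENNReal.toReal_natCast] at this

variable [DecidableEq ι]

noncomputable def Matrix.euclideanColBasis (M : Matrix ι ι ℝ) (hM : IsUnit M.det) :
    Module.Basis ι ℝ (EuclideanSpace ℝ ι) :=
  (EuclideanSpace.basisFun ι ℝ).toBasis.map <|
    LinearMap.equivOfDetNeZero (toLin (EuclideanSpace.basisFun ι ℝ).toBasis
      (EuclideanSpace.basisFun ι ℝ).toBasis M) (by rw [LinearMap.det_toLin]; exact hM.ne_zero)

theorem Matrix.euclideanColBasis_apply (M : Matrix ι ι ℝ) (hM : IsUnit M.det) (j i : ι) :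
    M.euclideanColBasis hM j i = M i j := by
  simp only [euclideanColBasis, Module.Basis.map_apply, LinearMap.equivOfDetNeZero,
    LinearEquiv.ofIsUnitDet_apply, toLin_self]
  simp [Pi.single_apply]

theorem Matrix.mem_span_euclideanColBasis_iff (M : Matrix ι ι ℝ) (hM : IsUnit M.det)
    (z : EuclideanSpace ℝ ι) : z ∈ span ℤ (Set.range (M.euclideanColBasis hM)) ↔
      ∃ f : ι → ℤ, WithLp.ofLp z = M *ᵥ (fun i => (f i : ℝ)) := by
  have hsum (f : ι → ℤ) : ∑ i, f i • M.euclideanColBasis hM i =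
      WithLp.toLp 2 (M *ᵥ (fun i => (f i : ℝ))) := by
    ext k
    simp [euclideanColBasis_apply, mulVec, dotProduct, mul_comm]
  simp only [mem_span_range_iff_exists_fun, hsum, ← (WithLp.ofLp_injective 2).eq_iff, eq_comm]

theorem Matrix.volume_fundamentalDomain_euclideanColBasis (M : Matrix ι ι ℝ)
    (hM : IsUnit M.det) :
    volume (ZSpan.fundamentalDomain (M.euclideanColBasis hM)) = ENNReal.ofReal |M.det| := by
  rw [ZSpan.measure_fundamentalDomain _ volume (EuclideanSpace.basisFun ι ℝ).toBasis,
    measure_congr (ZSpan.fundamentalDomain_ae_parallelepiped _ volume),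
    OrthonormalBasis.coe_toBasis, OrthonormalBasis.volume_parallelepiped, mul_one,
    Module.Basis.det_apply]
  congr 3
  ext i j
  simp [Module.Basis.toMatrix_apply, euclideanColBasis_apply]

theorem Matrix.ncard_preimage_ofLp_inter_span_euclideanColBasis (M : Matrix ι ι ℝ)
    (hM : IsUnit M.det) (S : Set (ι → ℝ)) :
    (WithLp.ofLp ⁻¹' S ∩ ((span ℤ (Set.range (M.euclideanColBasis hM))).toAddSubgroup :
      Set (EuclideanSpace ℝ ι))).ncard =
      {x | (∃ f : ι → ℤ, x = M *ᵥ (fun i => (f i : ℝ))) ∧ x ∈ S}.ncard := by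
  conv_rhs => rw [← Set.ncard_preimage_of_injective_subset_range (WithLp.ofLp_injective 2)
    fun x _ => WithLp.ofLp_surjective 2 x]
  congr 1
  ext z
  simp only [Set.mem_preimage, Set.mem_inter_iff, Set.mem_ofPred_eq, SetLike.mem_coe,
    mem_toAddSubgroup, M.mem_span_euclideanColBasis_iff hM, and_comm]

theorem Matrix.measureReal_voronoiCell_span_euclideanColBasis (M : Matrix ι ι ℝ)
    (hM : IsUnit M.det) :
    volume.real (voronoiCell (span ℤ (Set.range (M.euclideanColBasis hM))).toAddSubgroup) =
      |M.det| := by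
  have : Countable (span ℤ (Set.range (M.euclideanColBasis hM))).toAddSubgroup :=
    inferInstanceAs (Countable (span ℤ (Set.range (M.euclideanColBasis hM))))
  rw [measureReal_def, (isAddFundamentalDomain_voronoiCell volume).measure_eq
    (ZSpan.isAddFundamentalDomain _ volume), volume_fundamentalDomain_euclideanColBasis,
    ENNReal.toReal_ofReal (abs_nonneg _)]

end EuclideanSpace

theorem lattice_points_in_cube_count_general
    (p : ℕ)
    (G R : Matrix (Fin p) (Fin p) ℝ) (hG : IsUnit G.det) (hR : Rᵀ * R = 1)
    (ρ : ℝ) (hρ : 0 ≤ ρ)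
    (hcov : ∀ z : Fin p → ℝ, ∃ f : Fin p → ℤ,
      Real.sqrt (∑ k, (z k - (Rᵀ * Gᵀ).mulVec (fun i => (f i : ℝ)) k) ^ 2) ≤ ρ)
    (c : Fin p → ℝ) (t : ℝ) (ht : 2 * ρ ≤ t)
    (N : ℕ)
    (hN : N = Set.ncard {x : Fin p → ℝ |
      (∃ f : Fin p → ℤ, x = (Rᵀ * Gᵀ).mulVec (fun i => (f i : ℝ))) ∧
      ∀ k, x k ∈ Set.Icc (c k - t / 2) (c k + t / 2)}) :
    (t - 2 * ρ) ^ p ≤ (N : ℝ) * |G.det| ∧ (N : ℝ) * |G.det| ≤ (t + 2 * ρ) ^ p := by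
  set M := Rᵀ * Gᵀ
  have hdet : |M.det| = |G.det| := by
    simp [M, det_mul, abs_mul, abs_det_eq_one_of_transpose_mul_self hR]
  have hM : IsUnit M.det := by
    rw [isUnit_iff_ne_zero, ← abs_ne_zero, hdet, abs_ne_zero]; exact hG.ne_zero
  set L := (span ℤ (Set.range (M.euclideanColBasis hM))).toAddSubgroup
  have hcovL : ∀ z : EuclideanSpace ℝ (Fin p), ∃ v ∈ L, dist z v ≤ ρ := fun z => by
    obtain ⟨f, hf⟩ := hcov (WithLp.ofLp z)
    refine ⟨WithLp.toLp 2 (M *ᵥ fun i => (f i : ℝ)),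
      (M.mem_span_euclideanColBasis_iff hM _).2 ⟨f, rfl⟩, ?_⟩
    simpa [EuclideanSpace.dist_eq, Real.dist_eq, sq_abs] using hf
  have hNL : N = (WithLp.ofLp ⁻¹' closedBall c (t / 2) ∩
      (L : Set (EuclideanSpace ℝ (Fin p)))).ncard := by
    rw [hN, M.ncard_preimage_ofLp_inter_span_euclideanColBasis hM,
      closedBall_pi _ (by linarith : 0 ≤ t / 2)]
    simp_rw [Real.closedBall_eq_Icc, Set.mem_univ_pi]
  have hcube := ncard_inter_mul_measureReal_voronoiCell_mem_Icc hcovL c (by linarith : ρ ≤ t / 2)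
  rw [← hNL, M.measureReal_voronoiCell_span_euclideanColBasis hM, hdet, Fintype.card_fin,
    show 2 * (t / 2 - ρ) = t - 2 * ρ by ring, show 2 * (t / 2 + ρ) = t + 2 * ρ by ring] at hcube
  exact hcube

/-- If `ρ` bounds the covering radius of the lattice `L = {Rᵀ Gᵀ f : f ∈ ℤ^p}`, then the
number `N` of lattice points in any axis-aligned cube of side `t ≥ 2ρ` satisfies
`(t - 2ρ)^p ≤ N |det G| ≤ (t + 2ρ)^p`. -/
theorem lattice_points_in_cube_count
    (p : ℕ) (hp : 1 ≤ p)
    (G R : Matrix (Fin p) (Fin p) ℝ) (hG : IsUnit G.det) (hR : Rᵀ * R = 1)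
    (ρ : ℝ) (hρ : 0 ≤ ρ)
    (hcov : ∀ z : Fin p → ℝ, ∃ f : Fin p → ℤ,
      Real.sqrt (∑ k, (z k - (Rᵀ * Gᵀ).mulVec (fun i => (f i : ℝ)) k) ^ 2) ≤ ρ)
    (c : Fin p → ℝ) (t : ℝ) (ht : 2 * ρ ≤ t)
    (N : ℕ)
    (hN : N = Set.ncard {x : Fin p → ℝ |
      (∃ f : Fin p → ℤ, x = (Rᵀ * Gᵀ).mulVec (fun i => (f i : ℝ))) ∧
      ∀ k, x k ∈ Set.Icc (c k - t / 2) (c k + t / 2)}) :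
    (t - 2 * ρ) ^ p ≤ (N : ℝ) * |G.det| ∧ (N : ℝ) * |G.det| ≤ (t + 2 * ρ) ^ p :=
  lattice_points_in_cube_count_general p G R hG hR ρ hρ hcov c t ht N hN
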